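/- arXiv:1307.0660 — 6 statements merged into one kernel-verified Lean document; each statement's English description precedes it below -/
import Mathlib

section
/- For every real α, the relative entropy family D_n^α defined by D_n^α(p|q) = -∑_{i=1}^n p_i · ln_α(q_i/p_i) is α-recursive: for all n ≥ 3 and all p, q in the open probability simplex Γ_n° (all coordinates positive, summing to 1), D_n^α(p₁,…,p_n | q₁,…,q_n) = D_{n-1}^α(p₁+p₂, p₃,…,p_n | q₁+q₂, q₃,…,q_n) + (p₁+p₂)^α (q₁+q₂)^(1-α) · D_2^α(p₁/(p₁+p₂), p₂/(p₁+p₂) | q₁/(q₁+q₂), q₂/(q₁+q₂)). -/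
open Finset

/-- The deformed logarithm: ln_α = ln for α = 1, otherwise (x^(1-α)-1)/(1-α). -/
noncomputable def lnα (α x : ℝ) : ℝ :=
  if α = 1 then Real.log x else (x ^ (1 - α) - 1) / (1 - α)

/-- The relative entropy D^α(p|q) = -∑ pᵢ ln_α(qᵢ/pᵢ). -/
noncomputable def Dent (α : ℝ) {ι : Type} [Fintype ι] (p q : ι → ℝ) : ℝ :=
  -∑ i, p i * lnα α (q i / p i)

theorem lnα_mul (α : ℝ) {x y : ℝ} (hx : 0 < x) (hy : 0 < y) :
    lnα α (x * y) = lnα α x + x ^ (1 - α) * lnα α y := by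
  unfold lnα
  split_ifs with hα
  · simp [hα, Real.log_mul hx.ne' hy.ne']
  · have h1 : (1 : ℝ) - α ≠ 0 := sub_ne_zero.mpr (Ne.symm hα)
    rw [Real.mul_rpow hx.le hy.le]
    field_simp
    ring

theorem mul_rpow_one_sub_div_eq {α P Q : ℝ} (hP : 0 < P) (hQ : 0 ≤ Q) :
    P * (Q / P) ^ (1 - α) = P ^ α * Q ^ (1 - α) := by
  rw [Real.div_rpow hQ hP.le, Real.rpow_sub hP, Real.rpow_one]
  have hPα : 0 < P ^ α := Real.rpow_pos_of_pos hP α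
  field_simp

/-- Splitting off the common ratio `Q / P` from `qᵢ / pᵢ = (Q / P) * ((qᵢ / Q) / (pᵢ / P))`. -/
theorem mul_lnα_add_mul_lnα (α : ℝ) {p₀ p₁ q₀ q₁ : ℝ}
    (hp₀ : 0 < p₀) (hp₁ : 0 < p₁) (hq₀ : 0 < q₀) (hq₁ : 0 < q₁) :
    p₀ * lnα α (q₀ / p₀) + p₁ * lnα α (q₁ / p₁) =
      (p₀ + p₁) * lnα α ((q₀ + q₁) / (p₀ + p₁)) +
      (p₀ + p₁) ^ α * (q₀ + q₁) ^ (1 - α) *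
        (p₀ / (p₀ + p₁) * lnα α ((q₀ / (q₀ + q₁)) / (p₀ / (p₀ + p₁))) +
         p₁ / (p₀ + p₁) * lnα α ((q₁ / (q₀ + q₁)) / (p₁ / (p₀ + p₁)))) := by
  set P := p₀ + p₁
  set Q := q₀ + q₁
  have hP : 0 < P := by positivity
  have hQ : 0 < Q := by positivity
  have split : ∀ {p q : ℝ}, 0 < p → 0 < q →
      lnα α (q / p) = lnα α (Q / P) + (Q / P) ^ (1 - α) * lnα α ((q / Q) / (p / P)) := by
    intro p q hp hq
    rw [← lnα_mul α (by positivity) (by positivity)]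
    congr 1
    field_simp
  rw [split hp₀ hq₀, split hp₁ hq₁, ← mul_rpow_one_sub_div_eq hP hQ.le]
  field_simp
  ring

theorem Dent_recursive_general (α : ℝ) (n : ℕ) (p q : Fin (n + 3) → ℝ)
    (hp : ∀ i, 0 < p i) (hq : ∀ i, 0 < q i) :
    Dent α p q =
      Dent α (Fin.cons (p 0 + p 1) fun i : Fin (n + 1) => p i.succ.succ)
             (Fin.cons (q 0 + q 1) fun i : Fin (n + 1) => q i.succ.succ)
      + (p 0 + p 1) ^ α * (q 0 + q 1) ^ (1 - α) *
          Dent α ![p 0 / (p 0 + p 1), p 1 / (p 0 + p 1)]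
                 ![q 0 / (q 0 + q 1), q 1 / (q 0 + q 1)] := by
  have grouped := mul_lnα_add_mul_lnα α (hp 0) (hp 1) (hq 0) (hq 1)
  simp only [Dent, Fin.sum_univ_two, Fin.sum_univ_succ (n := n + 2), Fin.sum_univ_succ (n := n + 1),
    Fin.cons_zero, Fin.cons_succ, Matrix.cons_val_zero, Matrix.cons_val_one, Fin.succ_zero_eq_one]
  linear_combination -grouped

theorem Dent_recursive (α : ℝ) (n : ℕ) (p q : Fin (n + 3) → ℝ)
    (hp : ∀ i, 0 < p i) (hq : ∀ i, 0 < q i)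
    (hps : ∑ i, p i = 1) (hqs : ∑ i, q i = 1) :
    Dent α p q =
      Dent α (Fin.cons (p 0 + p 1) fun i : Fin (n + 1) => p i.succ.succ)
             (Fin.cons (q 0 + q 1) fun i : Fin (n + 1) => q i.succ.succ)
      + (p 0 + p 1) ^ α * (q 0 + q 1) ^ (1 - α) *
          Dent α ![p 0 / (p 0 + p 1), p 1 / (p 0 + p 1)]
                 ![q 0 / (q 0 + q 1), q 1 / (q 0 + q 1)] :=
  Dent_recursive_general α n p q hp hq
end

section
/- Suppose ℓ : ℝ₊ → ℝ is a logarithmic function (ℓ(xy) = ℓ(x)+ℓ(y) for all x,y > 0) satisfying x·ℓ(x) + (1-x)·ℓ(1-x) = 0 for all x ∈ (0,1). Then the function x ↦ x·ℓ(x) is additive on ℝ₊, i.e., x·ℓ(x) + y·ℓ(y) = (x+y)·ℓ(x+y) for all x, y > 0. -/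
/-!
Write `s = x + y` and `t = x / s`, so that `1 - t = y / s`. Since `ℓ` is logarithmic,
`x ℓ(x) = s · t ℓ(t) + x ℓ(s)` and `y ℓ(y) = s · (1 - t) ℓ(1 - t) + y ℓ(s)`; adding these, the
hypothesis on `(0, 1)` kills the first terms and leaves `s ℓ(s)`.
-/

lemma mul_apply_eq_of_logarithmic {ℓ : ℝ → ℝ}
    (hlog : ∀ x y : ℝ, 0 < x → 0 < y → ℓ (x * y) = ℓ x + ℓ y) {x s : ℝ} (hx : 0 < x) (hs : 0 < s) :
    x * ℓ x = s * (x / s * ℓ (x / s)) + x * ℓ s := by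
  have hsplit : ℓ x = ℓ (x / s) + ℓ s := by
    rw [← hlog _ _ (div_pos hx hs) hs, div_mul_cancel₀ x hs.ne']
  rw [hsplit, ← mul_assoc, mul_div_cancel₀ x hs.ne', mul_add]

theorem xlog_additive (ℓ : ℝ → ℝ)
    (hlog : ∀ x y : ℝ, 0 < x → 0 < y → ℓ (x * y) = ℓ x + ℓ y)
    (h : ∀ x ∈ Set.Ioo (0 : ℝ) 1, x * ℓ x + (1 - x) * ℓ (1 - x) = 0) :
    ∀ x y : ℝ, 0 < x → 0 < y → x * ℓ x + y * ℓ y = (x + y) * ℓ (x + y) := by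
  intro x y hx hy
  have hs : 0 < x + y := add_pos hx hy
  have hmem : x / (x + y) ∈ Set.Ioo (0 : ℝ) 1 :=
    ⟨div_pos hx hs, (div_lt_one hs).2 (lt_add_of_pos_right x hy)⟩
  have hcompl : 1 - x / (x + y) = y / (x + y) := by field_simp; ring
  have hvanish := h _ hmem
  rw [hcompl] at hvanish
  rw [mul_apply_eq_of_logarithmic hlog hx hs, mul_apply_eq_of_logarithmic hlog hy hs]
  linear_combination (x + y) * hvanish
end

section
/- Suppose ℓ : ℝ₊ → ℝ is a logarithmic function satisfying x·ℓ(x) + (1-x)·ℓ(1-x) = 0 for all x ∈ (0,1). Then there exists a real derivation d : ℝ → ℝ (an additive function satisfying d(xy) = x·d(y) + y·d(x) for all x, y ∈ ℝ) such that x·ℓ(x) = d(x) for all x > 0. -/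
/-!
Put `f x = x * ℓ x` for `x > 0`. The logarithmic law makes `f` satisfy the Leibniz rule on
positive reals, and splitting `s = s * u + s * (1 - u)` in the functional equation gives
`f (x + y) = f x + f y` for positive `x, y`. Such an `f` extends to all of `ℝ` by
`d (a - b) = f a - f b` with `a, b > 0`, which is well defined by additivity, and expanding
`(a - b) * (c - e)` shows that the extension still satisfies the Leibniz rule.
-/

lemma exists_eq_sub_of_pos (x : ℝ) : ∃ a b : ℝ, 0 < a ∧ 0 < b ∧ x = a - b :=
  ⟨x + (|x| + 1), |x| + 1, by linarith [neg_abs_le x], by positivity, by ring⟩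

def differenceExtension (f : ℝ → ℝ) (x : ℝ) : ℝ :=
  f (x + (|x| + 1)) - f (|x| + 1)

section DifferenceExtension

variable {f : ℝ → ℝ} (hadd : ∀ x y : ℝ, 0 < x → 0 < y → f (x + y) = f x + f y)
include hadd

theorem differenceExtension_sub {a b : ℝ} (ha : 0 < a) (hb : 0 < b) :
    differenceExtension f (a - b) = f a - f b := by
  set t := |a - b| + 1
  have ht : 0 < t := by positivity
  have hpos : 0 < a - b + t := by linarith [neg_abs_le (a - b)]
  have hsum : f (a - b + t) + f b = f a + f t := by
    rw [← hadd _ _ hpos hb, ← hadd _ _ ha ht]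
    ring_nf
  simp only [differenceExtension]
  linarith

theorem differenceExtension_of_pos {x : ℝ} (hx : 0 < x) : differenceExtension f x = f x := by
  have h1 : (0 : ℝ) < 1 := one_pos
  rw [show x = x + 1 - 1 by ring, differenceExtension_sub hadd (by linarith) h1,
    hadd _ _ hx h1]
  ring_nf

theorem differenceExtension_add (x y : ℝ) :
    differenceExtension f (x + y) = differenceExtension f x + differenceExtension f y := by
  obtain ⟨a, b, ha, hb, rfl⟩ := exists_eq_sub_of_pos x
  obtain ⟨c, e, hc, he, rfl⟩ := exists_eq_sub_of_pos y
  rw [show a - b + (c - e) = (a + c) - (b + e) by ring,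
    differenceExtension_sub hadd (by positivity) (by positivity), differenceExtension_sub hadd ha hb,
    differenceExtension_sub hadd hc he, hadd _ _ ha hc, hadd _ _ hb he]
  ring

theorem differenceExtension_mul
    (hmul : ∀ x y : ℝ, 0 < x → 0 < y → f (x * y) = x * f y + y * f x) (x y : ℝ) :
    differenceExtension f (x * y) = x * differenceExtension f y + y * differenceExtension f x := by
  obtain ⟨a, b, ha, hb, rfl⟩ := exists_eq_sub_of_pos x
  obtain ⟨c, e, hc, he, rfl⟩ := exists_eq_sub_of_pos y
  rw [show (a - b) * (c - e) = (a * c + b * e) - (a * e + b * c) by ring,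
    differenceExtension_sub hadd (by positivity) (by positivity), differenceExtension_sub hadd ha hb,
    differenceExtension_sub hadd hc he, hadd _ _ (by positivity) (by positivity),
    hadd _ _ (by positivity) (by positivity), hmul a c ha hc, hmul b e hb he, hmul a e ha he,
    hmul b c hb hc]
  ring

end DifferenceExtension

section Logarithmic

variable {ℓ : ℝ → ℝ} (hlog : ∀ x y : ℝ, 0 < x → 0 < y → ℓ (x * y) = ℓ x + ℓ y)
include hlog

theorem mul_log_mul_of_pos {x y : ℝ} (hx : 0 < x) (hy : 0 < y) :
    (x * y) * ℓ (x * y) = x * (y * ℓ y) + y * (x * ℓ x) := by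
  rw [hlog x y hx hy]
  ring

theorem mul_log_add_of_pos (h : ∀ x ∈ Set.Ioo (0 : ℝ) 1, x * ℓ x + (1 - x) * ℓ (1 - x) = 0)
    {x y : ℝ} (hx : 0 < x) (hy : 0 < y) :
    (x + y) * ℓ (x + y) = x * ℓ x + y * ℓ y := by
  set s := x + y
  have hs : 0 < s := by positivity
  set u := x / s
  have hu : u ∈ Set.Ioo (0 : ℝ) 1 := ⟨div_pos hx hs, (div_lt_one hs).2 (by linarith)⟩
  have hsu : s * u = x := mul_div_cancel₀ x hs.ne'
  have hsu' : s * (1 - u) = y := by rw [mul_one_sub, hsu]; ring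
  have split : (s * u) * ℓ (s * u) + (s * (1 - u)) * ℓ (s * (1 - u)) = s * ℓ s := by
    rw [hlog s u hs hu.1, hlog s (1 - u) hs (by linarith [hu.2])]
    linear_combination s * h u hu
  rw [hsu, hsu'] at split
  exact split.symm

end Logarithmic

theorem xlog_is_derivation (ℓ : ℝ → ℝ)
    (hlog : ∀ x y : ℝ, 0 < x → 0 < y → ℓ (x * y) = ℓ x + ℓ y)
    (h : ∀ x ∈ Set.Ioo (0 : ℝ) 1, x * ℓ x + (1 - x) * ℓ (1 - x) = 0) :
    ∃ d : ℝ → ℝ, (∀ x y : ℝ, d (x + y) = d x + d y) ∧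
      (∀ x y : ℝ, d (x * y) = x * d y + y * d x) ∧
      ∀ x : ℝ, 0 < x → x * ℓ x = d x := by
  have hadd : ∀ x y : ℝ, 0 < x → 0 < y → (x + y) * ℓ (x + y) = x * ℓ x + y * ℓ y :=
    fun _ _ hx hy => mul_log_add_of_pos hlog h hx hy
  have hmul : ∀ x y : ℝ, 0 < x → 0 < y → (x * y) * ℓ (x * y) = x * (y * ℓ y) + y * (x * ℓ x) :=
    fun _ _ hx hy => mul_log_mul_of_pos hlog hx hy
  exact ⟨differenceExtension (fun x => x * ℓ x), differenceExtension_add hadd,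
    differenceExtension_mul hadd hmul,
    fun _ hx => (differenceExtension_of_pos (f := fun x => x * ℓ x) hadd hx).symm⟩
end

section
/- Every additive function d : ℝ → ℝ satisfying d(xy) = x·d(y) + y·d(x) for all positive reals x, y (only on ℝ₊) is odd, and consequently satisfies d(xy) = x·d(y) + y·d(x) for all x, y ∈ ℝ. -/
/-! Additivity makes `d` odd, and then the Leibniz identity at `(x, y)` is unchanged when either
argument changes sign, so it reduces to the case `(|x|, |y|)`, which is trivial or positive. -/

section Leibniz

variable {R : Type*} [CommRing R] (d : R →+ R)

def LeibnizAt (x y : R) : Prop := d (x * y) = x * d y + y * d x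

variable {d}

theorem leibnizAt_neg_left_iff {x y : R} : LeibnizAt d (-x) y ↔ LeibnizAt d x y := by
  simp only [LeibnizAt, neg_mul, map_neg, mul_neg]
  constructor <;> intro h <;> linear_combination -h

theorem leibnizAt_comm {x y : R} : LeibnizAt d y x ↔ LeibnizAt d x y := by
  simp only [LeibnizAt, mul_comm y x, add_comm (y * d x)]

theorem leibnizAt_neg_right_iff {x y : R} : LeibnizAt d x (-y) ↔ LeibnizAt d x y := by
  rw [← leibnizAt_comm, leibnizAt_neg_left_iff, leibnizAt_comm]

theorem leibnizAt_zero_left (y : R) : LeibnizAt d 0 y := by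
  simp [LeibnizAt]

variable [LinearOrder R]

theorem leibnizAt_of_abs {x y : R} (h : LeibnizAt d |x| |y|) : LeibnizAt d x y := by
  rcases abs_choice x with hx | hx <;> rcases abs_choice y with hy | hy <;>
    simpa only [hx, hy, leibnizAt_neg_left_iff, leibnizAt_neg_right_iff] using h

variable [IsStrictOrderedRing R]

theorem leibnizAt_of_forall_pos (h : ∀ x y : R, 0 < x → 0 < y → LeibnizAt d x y) (x y : R) :
    LeibnizAt d x y := by
  refine leibnizAt_of_abs ?_
  rcases (abs_nonneg x).eq_or_lt with hx | hx
  · rw [← hx]; exact leibnizAt_zero_left _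
  rcases (abs_nonneg y).eq_or_lt with hy | hy
  · rw [← leibnizAt_comm, ← hy]; exact leibnizAt_zero_left _
  exact h _ _ hx hy

end Leibniz

theorem derivation_on_pos_extends (d : ℝ → ℝ)
    (hadd : ∀ x y : ℝ, d (x + y) = d x + d y)
    (hleib : ∀ x y : ℝ, 0 < x → 0 < y → d (x * y) = x * d y + y * d x) :
    (∀ x : ℝ, d (-x) = -d x) ∧ ∀ x y : ℝ, d (x * y) = x * d y + y * d x :=
  ⟨map_neg (AddMonoidHom.mk' d hadd), leibnizAt_of_forall_pos (d := AddMonoidHom.mk' d hadd) hleib⟩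
end

section
/- Let α ∈ ℝ and let (I_n) be an expansible relative information measure on the closed domain satisfying generalized additivity with parameter α (under the conventions 0/0 = 0 and 0^α = 0^(1-α) = 0). Then (I_n) is decisive, i.e., I₂(1,0|1,0) = 0. -/
open Finset

/-- Power with the convention 0^a = 0 (for every exponent a). -/
noncomputable def cpow (x a : ℝ) : ℝ := if x = 0 then 0 else x ^ a

/-!
Take `p = q = (1, 0) ⊗ (1, 0)`. Generalized additivity splits `I₄(p | q)` into `I₂(1,0 | 1,0)` plus
the same quantity weighted by `1^α 1^(1-α) = 1`, the second row contributing nothing since its weight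
is `0^α 0^(1-α) = 0`. Expansibility identifies `I₄(1,0,0,0 | 1,0,0,0)` with `I₂(1,0 | 1,0)`, so this
number equals twice itself.
-/

@[simp]
theorem cpow_zero_left (a : ℝ) : cpow 0 a = 0 := if_pos rfl

@[simp]
theorem cpow_one_left (a : ℝ) : cpow 1 a = 1 := by
  simp [cpow]

def IsExpansible (I : (n : ℕ) → (Fin n → ℝ) → (Fin n → ℝ) → ℝ) : Prop :=
  ∀ n : ℕ, ∀ p q : Fin (n + 2) → ℝ,
    (∀ i, 0 ≤ p i) → (∀ i, 0 ≤ q i) → ∑ i, p i = 1 → ∑ i, q i = 1 →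
    I (n + 3) (Fin.snoc p 0) (Fin.snoc q 0) = I (n + 2) p q

def IsGenAdditive (α : ℝ) (I : (n : ℕ) → (Fin n → ℝ) → (Fin n → ℝ) → ℝ) : Prop :=
  ∀ n m : ℕ, ∀ p q : Fin (n + 2) → Fin (m + 2) → ℝ,
    (∀ i j, 0 ≤ p i j) → (∀ i j, 0 ≤ q i j) →
    ∑ i, ∑ j, p i j = 1 → ∑ i, ∑ j, q i j = 1 →
    I ((n + 2) * (m + 2))
        (fun k => p (finProdFinEquiv.symm k).1 (finProdFinEquiv.symm k).2)
        (fun k => q (finProdFinEquiv.symm k).1 (finProdFinEquiv.symm k).2)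
      = I (n + 2) (fun i => ∑ j, p i j) (fun i => ∑ j, q i j)
        + ∑ i : Fin (n + 2),
            cpow (∑ j, p i j) α * cpow (∑ j, q i j) (1 - α) *
              I (m + 2) (fun j => p i j / ∑ j', p i j')
                        (fun j => q i j / ∑ j', q i j')

variable {α : ℝ} {I : (n : ℕ) → (Fin n → ℝ) → (Fin n → ℝ) → ℝ} {n m : ℕ}

theorem Fin.snoc_zero_nonneg {p : Fin n → ℝ} (hp : ∀ i, 0 ≤ p i) (i : Fin (n + 1)) :
    0 ≤ (Fin.snoc p 0 : Fin (n + 1) → ℝ) i :=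
  Fin.lastCases (by simp) (fun j => by simpa using hp j) i

theorem IsExpansible.apply_snoc_snoc (hexp : IsExpansible I) {p q : Fin (n + 2) → ℝ}
    (hp : ∀ i, 0 ≤ p i) (hq : ∀ i, 0 ≤ q i) (hp1 : ∑ i, p i = 1) (hq1 : ∑ i, q i = 1) :
    I (n + 4) (Fin.snoc (Fin.snoc p 0) 0) (Fin.snoc (Fin.snoc q 0) 0) = I (n + 2) p q :=
  (hexp (n + 1) _ _ (Fin.snoc_zero_nonneg hp) (Fin.snoc_zero_nonneg hq)
    (by simpa using hp1) (by simpa using hq1)).trans (hexp n p q hp hq hp1 hq1)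

theorem IsGenAdditive.apply_mul (hadd : IsGenAdditive α I)
    {u u' : Fin (n + 2) → ℝ} {v v' : Fin (m + 2) → ℝ}
    (hu : ∀ i, 0 ≤ u i) (hu' : ∀ i, 0 ≤ u' i) (hv : ∀ j, 0 ≤ v j) (hv' : ∀ j, 0 ≤ v' j)
    (hu1 : ∑ i, u i = 1) (hu1' : ∑ i, u' i = 1) (hv1 : ∑ j, v j = 1) (hv1' : ∑ j, v' j = 1) :
    I ((n + 2) * (m + 2))
        (fun k => u (finProdFinEquiv.symm k).1 * v (finProdFinEquiv.symm k).2)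
        (fun k => u' (finProdFinEquiv.symm k).1 * v' (finProdFinEquiv.symm k).2)
      = I (n + 2) u u' + (∑ i, cpow (u i) α * cpow (u' i) (1 - α)) * I (m + 2) v v' := by
  have key := hadd n m (fun i j => u i * v j) (fun i j => u' i * v' j)
    (fun i j => mul_nonneg (hu i) (hv j)) (fun i j => mul_nonneg (hu' i) (hv' j))
    (by simp [← mul_sum, hv1, hu1]) (by simp [← mul_sum, hv1', hu1'])
  simp only [← mul_sum, hv1, hv1', mul_one] at key
  rw [key, sum_mul]
  congr 1
  refine sum_congr rfl fun i _ => ?_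
  by_cases hi : u i = 0
  · simp [hi]
  by_cases hi' : u' i = 0
  · simp [hi']
  simp only [mul_div_cancel_left₀ _ hi, mul_div_cancel_left₀ _ hi']

theorem expansible_additive_decisive (α : ℝ)
    (I : (n : ℕ) → (Fin n → ℝ) → (Fin n → ℝ) → ℝ)
    (hexp : ∀ n : ℕ, ∀ p q : Fin (n + 2) → ℝ,
      (∀ i, 0 ≤ p i) → (∀ i, 0 ≤ q i) → ∑ i, p i = 1 → ∑ i, q i = 1 →
      I (n + 3) (Fin.snoc p 0) (Fin.snoc q 0) = I (n + 2) p q)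
    (hadd : ∀ n m : ℕ, ∀ p q : Fin (n + 2) → Fin (m + 2) → ℝ,
      (∀ i j, 0 ≤ p i j) → (∀ i j, 0 ≤ q i j) →
      ∑ i, ∑ j, p i j = 1 → ∑ i, ∑ j, q i j = 1 →
      I ((n + 2) * (m + 2))
          (fun k => p (finProdFinEquiv.symm k).1 (finProdFinEquiv.symm k).2)
          (fun k => q (finProdFinEquiv.symm k).1 (finProdFinEquiv.symm k).2)
        = I (n + 2) (fun i => ∑ j, p i j) (fun i => ∑ j, q i j)
          + ∑ i : Fin (n + 2),
              cpow (∑ j, p i j) α * cpow (∑ j, q i j) (1 - α) *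
                I (m + 2) (fun j => p i j / ∑ j', p i j')
                          (fun j => q i j / ∑ j', q i j'))
    : I 2 ![1, 0] ![1, 0] = 0 := by
  set e : Fin 2 → ℝ := ![1, 0]
  have he : ∀ i, 0 ≤ e i := fun i => by fin_cases i <;> simp [e]
  have he1 : ∑ i, e i = 1 := by simp [e]
  have hprod : (fun k : Fin (2 * 2) =>
      e (finProdFinEquiv.symm k).1 * e (finProdFinEquiv.symm k).2)
        = Fin.snoc (Fin.snoc e 0) 0 := by
    funext k
    fin_cases k <;> simp [e, finProdFinEquiv, Fin.snoc, Fin.divNat, Fin.modNat]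
  have hweight : ∑ i, cpow (e i) α * cpow (e i) (1 - α) = 1 := by simp [e]
  have hsplit := IsGenAdditive.apply_mul (n := 0) (m := 0) hadd he he he he he1 he1 he1 he1
  rw [hprod, hweight, one_mul,
    IsExpansible.apply_snoc_snoc (n := 0) hexp he he he1 he1] at hsplit
  linarith
end

section
/- Let α ∈ ℝ and let (I_n) be an expansible relative information measure on the closed domain satisfying generalized additivity with parameter α (conventions 0/0 = 0, 0^α = 0^(1-α) = 0). Then (I_n) is α-recursive on the closed domain: for all n ≥ 3 and r, s ∈ Γ_n, I_n(r₁,…,r_n|s₁,…,s_n) = I_{n-1}(r₁+r₂,r₃,…,r_n|s₁+s₂,s₃,…,s_n) + (r₁+r₂)^α(s₁+s₂)^(1-α)·I₂(r₁/(r₁+r₂), r₂/(r₁+r₂) | s₁/(s₁+s₂), s₂/(s₁+s₂)). -/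
open Finset

/-!
Additivity applied to the `(n + 2) × 2` array with rows `(r₀, r₁), (0, r₂), …, (0, r_{n+2})` has
the right-hand side of the recursion as its right-hand side: the rows below the first have
vertices of the simplex as conditional distributions, and `I_N(e_K | e_K) = 0`, because additivity
makes `K ↦ I(e_K | e_K)` (independent of `N` by expansibility) additive along mixed-radix
encodings. The left-hand side is `I` of the flattened array, i.e. of `r` with zeros interleaved,
so zero coordinates have to be deleted at arbitrary positions, not only at the end. Additivity
again shows that a vector placed one entry per row into an array has the information of the
vector; and a vector with a zero at position `t` and the vector with that zero deleted admit such
placements, into an `(N + 1) × N` and an `N × (N + 1)` array, that flatten to the same vector.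
-/

namespace RelativeInformation

lemma zero_cpow (a : ℝ) : cpow 0 a = 0 := if_pos rfl

lemma one_cpow (a : ℝ) : cpow 1 a = 1 := by
  rw [cpow, if_neg one_ne_zero, Real.one_rpow]

lemma cpow_mul_cpow_mul_mul_div (I : (n : ℕ) → (Fin n → ℝ) → (Fin n → ℝ) → ℝ) (α x y : ℝ)
    {m : ℕ} (f g : Fin m → ℝ) :
    cpow x α * cpow y (1 - α) * I m (fun j => x * f j / x) (fun j => y * g j / y)
      = cpow x α * cpow y (1 - α) * I m f g := by
  rcases eq_or_ne x 0 with rfl | hx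
  · simp only [zero_cpow, zero_mul]
  rcases eq_or_ne y 0 with rfl | hy
  · simp only [zero_cpow, mul_zero, zero_mul]
  simp only [mul_div_cancel_left₀ _ hx, mul_div_cancel_left₀ _ hy]

def flatten {a b : ℕ} (p : Fin a → Fin b → ℝ) : Fin (a * b) → ℝ :=
  fun k => p (finProdFinEquiv.symm k).1 (finProdFinEquiv.symm k).2

def IsExpansible (I : (n : ℕ) → (Fin n → ℝ) → (Fin n → ℝ) → ℝ) : Prop :=
  ∀ n : ℕ, ∀ p q : Fin (n + 2) → ℝ,
    (∀ i, 0 ≤ p i) → (∀ i, 0 ≤ q i) → ∑ i, p i = 1 → ∑ i, q i = 1 →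
    I (n + 3) (Fin.snoc p 0) (Fin.snoc q 0) = I (n + 2) p q

def IsAdditive (α : ℝ) (I : (n : ℕ) → (Fin n → ℝ) → (Fin n → ℝ) → ℝ) : Prop :=
  ∀ n m : ℕ, ∀ p q : Fin (n + 2) → Fin (m + 2) → ℝ,
    (∀ i j, 0 ≤ p i j) → (∀ i j, 0 ≤ q i j) →
    ∑ i, ∑ j, p i j = 1 → ∑ i, ∑ j, q i j = 1 →
    I ((n + 2) * (m + 2)) (flatten p) (flatten q)
      = I (n + 2) (fun i => ∑ j, p i j) (fun i => ∑ j, q i j)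
        + ∑ i : Fin (n + 2), cpow (∑ j, p i j) α * cpow (∑ j, q i j) (1 - α) *
            I (m + 2) (fun j => p i j / ∑ j', p i j') (fun j => q i j / ∑ j', q i j')

lemma flatten_finProdFinEquiv {a b : ℕ} (p : Fin a → Fin b → ℝ) (x : Fin a × Fin b) :
    flatten p (finProdFinEquiv x) = p x.1 x.2 := by
  simp only [flatten, Equiv.symm_apply_apply]

lemma sum_flatten {a b : ℕ} (p : Fin a → Fin b → ℝ) : ∑ k, flatten p k = ∑ i, ∑ j, p i j := by
  rw [← finProdFinEquiv.sum_comp, Fintype.sum_prod_type]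
  simp only [flatten_finProdFinEquiv]

lemma flatten_mem_stdSimplex {a b : ℕ} {p : Fin a → Fin b → ℝ} (hp : ∀ i j, 0 ≤ p i j)
    (hp1 : ∑ i, ∑ j, p i j = 1) : flatten p ∈ stdSimplex ℝ (Fin (a * b)) :=
  ⟨fun _ => hp _ _, (sum_flatten p).trans hp1⟩

lemma comp_mem_stdSimplex {ι κ : Type*} [Fintype ι] [Fintype κ] {v : ι → ℝ}
    (hv : v ∈ stdSimplex ℝ ι) (e : κ ≃ ι) : v ∘ e ∈ stdSimplex ℝ κ :=
  ⟨fun _ => hv.1 _, (e.sum_comp v).trans hv.2⟩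

lemma removeNth_mem_stdSimplex {N : ℕ} {v : Fin (N + 1) → ℝ} (hv : v ∈ stdSimplex ℝ _)
    {t : Fin (N + 1)} (ht : v t = 0) : t.removeNth v ∈ stdSimplex ℝ (Fin N) :=
  ⟨fun _ => hv.1 _, by rw [← hv.2, ← Fin.add_sum_removeNth t, ht, zero_add]⟩

/-- The vertex `e_K` of the simplex in `ℝ^N`, indexed by a natural number so that the same vertex
can be compared across dimensions. -/
def unitVec (N K : ℕ) : Fin N → ℝ := fun i => if (i : ℕ) = K then 1 else 0

lemma unitVec_nonneg (N K : ℕ) (i : Fin N) : 0 ≤ unitVec N K i := by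
  unfold unitVec; split_ifs <;> norm_num

lemma sum_unitVec {N K : ℕ} (hK : K < N) : ∑ i, unitVec N K i = 1 := by
  rw [Finset.sum_eq_single (f := unitVec N K) ⟨K, hK⟩ (fun i _ hi => if_neg fun h => hi (Fin.ext h))
    (fun h => absurd (mem_univ _) h)]
  exact if_pos rfl

lemma unitVec_mem_stdSimplex {N K : ℕ} (hK : K < N) : unitVec N K ∈ stdSimplex ℝ (Fin N) :=
  ⟨unitVec_nonneg N K, sum_unitVec hK⟩

lemma unitVec_succ {N K : ℕ} (hK : K < N) : unitVec (N + 1) K = Fin.snoc (unitVec N K) 0 := by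
  funext i
  induction i using Fin.lastCases with
  | last => simp [unitVec, hK.ne']
  | cast i => simp [unitVec]

def place {a : ℕ} (b : ℕ) (v : Fin a → ℝ) (ρ : Fin a → ℕ) : Fin a → Fin b → ℝ :=
  fun i j => v i * unitVec b (ρ i) j

lemma place_nonneg {a b : ℕ} {v : Fin a → ℝ} (hv : ∀ i, 0 ≤ v i) (ρ : Fin a → ℕ) (i : Fin a)
    (j : Fin b) : 0 ≤ place b v ρ i j :=
  mul_nonneg (hv i) (unitVec_nonneg _ _ _)

lemma sum_place {a b : ℕ} (v : Fin a → ℝ) {ρ : Fin a → ℕ} (hρ : ∀ i, ρ i < b) (i : Fin a) :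
    ∑ j, place b v ρ i j = v i := by
  simp only [place, ← mul_sum, sum_unitVec (hρ i), mul_one]

lemma sum_sum_place {a b : ℕ} (v : Fin a → ℝ) {ρ : Fin a → ℕ} (hρ : ∀ i, ρ i < b) :
    ∑ i, ∑ j, place b v ρ i j = ∑ i, v i :=
  sum_congr rfl fun i _ => sum_place v hρ i

lemma flatten_place {a b : ℕ} (v : Fin a → ℝ) {ρ : Fin a → ℕ} (hρ : ∀ i, ρ i < b)
    (k : Fin (a * b)) :
    flatten (place b v ρ) k = ∑ i, if (k : ℕ) = ρ i + b * i then v i else 0 := by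
  obtain ⟨⟨i₀, j₀⟩, rfl⟩ := finProdFinEquiv.surjective k
  have hpos : ∀ i, (finProdFinEquiv (i₀, j₀) : ℕ) = ρ i + b * i ↔ i₀ = i ∧ j₀ = ⟨ρ i, hρ i⟩ := by
    intro i
    rw [← Prod.mk.injEq, ← finProdFinEquiv.injective.eq_iff, Fin.ext_iff,
      finProdFinEquiv_apply_val (i, _)]
  simp only [hpos, ite_and, sum_ite_eq, mem_univ, if_true]
  simp only [flatten_finProdFinEquiv, place, unitVec, Fin.ext_iff, mul_ite, mul_one, mul_zero]

lemma flatten_place_of_val_eq {a b : ℕ} (v : Fin a → ℝ) {ρ : Fin a → ℕ} (hρ : ∀ i, ρ i < b)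
    {k : Fin (a * b)} {i : Fin a} (hk : (k : ℕ) = ρ i + b * i) : flatten (place b v ρ) k = v i := by
  obtain rfl : k = finProdFinEquiv (i, ⟨ρ i, hρ i⟩) := Fin.ext hk
  simp [flatten_finProdFinEquiv, place, unitVec]

lemma flatten_place_of_forall_ne {a b : ℕ} (v : Fin a → ℝ) {ρ : Fin a → ℕ} (hρ : ∀ i, ρ i < b)
    {k : Fin (a * b)} (hk : ∀ i : Fin a, (k : ℕ) ≠ ρ i + b * i) : flatten (place b v ρ) k = 0 := by
  rw [flatten_place v hρ]
  exact sum_eq_zero fun i _ => if_neg (hk i)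

lemma flatten_place_unitVec {a b i j : ℕ} (hi : i < a) (hj : j < b) :
    flatten (place b (unitVec a i) fun _ => j) = unitVec (a * b) (j + b * i) := by
  funext k
  rw [flatten_place _ (fun _ => hj), sum_eq_single (⟨i, hi⟩ : Fin a)]
  · simp [unitVec]
  · intro i' _ hi'
    simp [unitVec, Fin.val_ne_of_ne hi']
  · simp

lemma apply_comp_cast (I : (n : ℕ) → (Fin n → ℝ) → (Fin n → ℝ) → ℝ) {M N : ℕ} (h : M = N)
    (v w : Fin N → ℝ) : I N v w = I M (v ∘ Fin.cast h) (w ∘ Fin.cast h) := by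
  subst h
  rfl

lemma val_succAbove {N : ℕ} (t : Fin (N + 1)) (j : Fin N) :
    (t.succAbove j : ℕ) = if (j : ℕ) < t then (j : ℕ) else j + 1 := by
  rcases lt_or_ge (j : ℕ) t with h | h
  · rw [Fin.succAbove_of_castSucc_lt t j h, if_pos h, Fin.val_castSucc]
  · rw [Fin.succAbove_of_le_castSucc t j h, if_neg (by omega), Fin.val_succ]

-- Both arrays put the entries of `v` before `t` at the positions `(N + 1) k`, those after `t` at
-- the positions `N k`.
lemma flatten_place_eq_flatten_place_removeNth {N : ℕ} (hN : 0 < N) {v : Fin (N + 1) → ℝ}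
    {t : Fin (N + 1)} (ht : v t = 0) (k : Fin ((N + 1) * N)) :
    flatten (place N v fun i => if (i : ℕ) < t then i else 0) k
      = flatten (place (N + 1) (t.removeNth v) fun j => if (j : ℕ) < t then 0 else N - j)
          (Fin.cast (Nat.mul_comm _ _) k) := by
  have hpos : ∀ j : Fin N,
      (if (t.succAbove j : ℕ) < t then (t.succAbove j : ℕ) else 0) + N * t.succAbove j
        = (if (j : ℕ) < t then 0 else N - j) + (N + 1) * j := by
    intro j
    rw [val_succAbove]
    rcases lt_or_ge (j : ℕ) t with h | h
    · simp only [if_pos h]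
      ring
    · simp only [if_neg (show ¬ (j : ℕ) < t by omega), if_neg (show ¬ (j : ℕ) + 1 < t by omega)]
      zify [j.isLt.le]
      ring
  rw [flatten_place _ (fun i => by split_ifs <;> omega),
    flatten_place _ (fun j => by split_ifs <;> omega), Fin.sum_univ_succAbove _ t, ht, ite_self,
    zero_add, Fin.val_cast]
  simp only [Fin.removeNth_apply, hpos]

section

variable {α : ℝ} {I : (n : ℕ) → (Fin n → ℝ) → (Fin n → ℝ) → ℝ}

lemma apply_flatten_place_eq_add (hadd : IsAdditive α I) {a b : ℕ} {v w : Fin (a + 2) → ℝ}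
    (hv : v ∈ stdSimplex ℝ _) (hw : w ∈ stdSimplex ℝ _) {ρ : Fin (a + 2) → ℕ}
    (hρ : ∀ i, ρ i < b + 2) :
    I ((a + 2) * (b + 2)) (flatten (place (b + 2) v ρ)) (flatten (place (b + 2) w ρ))
      = I (a + 2) v w + ∑ i, cpow (v i) α * cpow (w i) (1 - α) *
          I (b + 2) (unitVec (b + 2) (ρ i)) (unitVec (b + 2) (ρ i)) := by
  have hrow : ∀ u : Fin (a + 2) → ℝ, (fun i => ∑ j, place (b + 2) u ρ i j) = u :=
    fun u => funext (sum_place u hρ)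
  rw [hadd a b _ _ (place_nonneg hv.1 ρ) (place_nonneg hw.1 ρ) ((sum_sum_place v hρ).trans hv.2)
    ((sum_sum_place w hρ).trans hw.2), hrow, hrow]
  congr 1
  refine sum_congr rfl fun i _ => ?_
  simp only [sum_place _ hρ]
  exact cpow_mul_cpow_mul_mul_div I α _ _ _ _

lemma apply_unitVec_succ (hexp : IsExpansible I) {N K : ℕ} (hK : K < N + 2) :
    I (N + 3) (unitVec (N + 3) K) (unitVec (N + 3) K)
      = I (N + 2) (unitVec (N + 2) K) (unitVec (N + 2) K) := by
  have h := hexp N _ _ (unitVec_nonneg _ _) (unitVec_nonneg _ _) (sum_unitVec hK) (sum_unitVec hK)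
  rwa [← unitVec_succ hK] at h

lemma apply_unitVec_add (hexp : IsExpansible I) {N K : ℕ} (hK : K < N + 2) (d : ℕ) :
    I (N + d + 2) (unitVec (N + d + 2) K) (unitVec (N + d + 2) K)
      = I (N + 2) (unitVec (N + 2) K) (unitVec (N + 2) K) := by
  induction d with
  | zero => rfl
  | succ d ih => exact (apply_unitVec_succ hexp (N := N + d) (by omega)).trans ih

lemma apply_unitVec_congr (hexp : IsExpansible I) {N M K : ℕ} (hN : 2 ≤ N) (hM : 2 ≤ M)
    (hKN : K < N) (hKM : K < M) :
    I N (unitVec N K) (unitVec N K) = I M (unitVec M K) (unitVec M K) := by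
  obtain ⟨N, rfl⟩ := Nat.exists_eq_add_of_le' hN
  obtain ⟨M, rfl⟩ := Nat.exists_eq_add_of_le' hM
  calc I (N + 2) (unitVec (N + 2) K) (unitVec (N + 2) K)
      = I (N + M + 2) (unitVec (N + M + 2) K) (unitVec (N + M + 2) K) :=
        (apply_unitVec_add hexp hKN M).symm
    _ = I (M + N + 2) (unitVec (M + N + 2) K) (unitVec (M + N + 2) K) := by rw [add_comm N M]
    _ = I (M + 2) (unitVec (M + 2) K) (unitVec (M + 2) K) := apply_unitVec_add hexp hKM N

lemma apply_unitVec_mul (hadd : IsAdditive α I) {a b i j : ℕ} (hi : i < a + 2)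
    (hj : j < b + 2) :
    I ((a + 2) * (b + 2)) (unitVec _ (j + (b + 2) * i)) (unitVec _ (j + (b + 2) * i))
      = I (a + 2) (unitVec (a + 2) i) (unitVec (a + 2) i)
        + I (b + 2) (unitVec (b + 2) j) (unitVec (b + 2) j) := by
  rw [← flatten_place_unitVec hi hj, apply_flatten_place_eq_add hadd (unitVec_mem_stdSimplex hi)
    (unitVec_mem_stdSimplex hi) fun _ => hj, sum_eq_single (⟨i, hi⟩ : Fin (a + 2))]
  · simp [unitVec, one_cpow]
  · intro i' _ hi'
    simp [unitVec, Fin.val_ne_of_ne hi', zero_cpow]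
  · simp

lemma apply_unitVec_self (hexp : IsExpansible I) (hadd : IsAdditive α I) {N K : ℕ} (hN : 2 ≤ N)
    (hK : K < N) : I N (unitVec N K) (unitVec N K) = 0 := by
  set z : ℕ → ℕ → ℝ := fun N K => I N (unitVec N K) (unitVec N K) with hz
  have hcongr : ∀ {N M K : ℕ}, 2 ≤ N → 2 ≤ M → K < N → K < M → z N K = z M K :=
    fun hN hM hKN hKM => apply_unitVec_congr hexp hN hM hKN hKM
  have z20 : z 2 0 = 0 := by
    have h := apply_unitVec_mul hadd (a := 0) (b := 0) (i := 0) (j := 0) (by omega) (by omega)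
    have h' := hcongr (N := 4) (M := 2) (K := 0) (by omega) (by omega) (by omega) (by omega)
    simp only [hz] at h h' ⊢
    norm_num at h
    linarith
  have z21 : z 2 1 = 0 := by
    have h := apply_unitVec_mul hadd (a := 0) (b := 0) (i := 1) (j := 1) (by omega) (by omega)
    have h' := apply_unitVec_mul hadd (a := 0) (b := 1) (i := 1) (j := 0) (by omega) (by omega)
    have h₁ := hcongr (N := 6) (M := 4) (K := 3) (by omega) (by omega) (by omega) (by omega)
    have h₂ := hcongr (N := 3) (M := 2) (K := 0) (by omega) (by omega) (by omega) (by omega)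
    simp only [hz] at h h' h₁ h₂ z20 ⊢
    norm_num at h h'
    linarith
  suffices hzK : ∀ K, z (K + 2) K = 0 from (hcongr hN (by omega) hK (by omega)).trans (hzK K)
  intro K
  match K with
  | 0 => exact z20
  | 1 => exact (hcongr (N := 3) (M := 2) (by omega) (by omega) (by omega) (by omega)).trans z21
  | k + 2 =>
    have h := apply_unitVec_mul hadd (a := 0) (b := k) (i := 1) (j := 0) (by omega) (by omega)
    have h' := hcongr (N := 2 * (k + 2)) (M := k + 2 + 2) (K := k + 2) (by omega) (by omega)
      (by omega) (by omega)
    have h₀ := hcongr (N := k + 2) (M := 2) (K := 0) (by omega) (by omega) (by omega) (by omega)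
    simp only [hz, Nat.zero_add, mul_one] at h h' h₀ z20 z21 ⊢
    linarith

lemma apply_flatten_place (hexp : IsExpansible I) (hadd : IsAdditive α I) {a b : ℕ}
    {v w : Fin (a + 2) → ℝ} (hv : v ∈ stdSimplex ℝ _) (hw : w ∈ stdSimplex ℝ _)
    {ρ : Fin (a + 2) → ℕ} (hρ : ∀ i, ρ i < b + 2) :
    I ((a + 2) * (b + 2)) (flatten (place (b + 2) v ρ)) (flatten (place (b + 2) w ρ))
      = I (a + 2) v w := by
  rw [apply_flatten_place_eq_add hadd hv hw hρ, add_eq_left]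
  exact sum_eq_zero fun i _ => by rw [apply_unitVec_self hexp hadd (by omega) (hρ i), mul_zero]

lemma apply_removeNth (hexp : IsExpansible I) (hadd : IsAdditive α I) {N : ℕ} (t : Fin (N + 3))
    {v w : Fin (N + 3) → ℝ} (hv : v ∈ stdSimplex ℝ _) (hw : w ∈ stdSimplex ℝ _) (hvt : v t = 0)
    (hwt : w t = 0) : I (N + 3) v w = I (N + 2) (t.removeNth v) (t.removeNth w) := by
  have hd : ∀ i : Fin (N + 3), (if (i : ℕ) < t then (i : ℕ) else 0) < N + 2 := fun i => by
    split_ifs <;> omega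
  have hc : ∀ j : Fin (N + 2), (if (j : ℕ) < t then 0 else N + 2 - j) < N + 3 := fun j => by
    split_ifs <;> omega
  set d : Fin (N + 3) → ℕ := fun i => if (i : ℕ) < t then i else 0
  set c : Fin (N + 2) → ℕ := fun j => if (j : ℕ) < t then 0 else N + 2 - j
  calc I (N + 3) v w
      = I ((N + 1 + 2) * (N + 2)) (flatten (place (N + 2) v d)) (flatten (place (N + 2) w d)) :=
        (apply_flatten_place hexp hadd hv hw hd).symm
    _ = I ((N + 2) * (N + 1 + 2)) (flatten (place (N + 3) (t.removeNth v) c))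
          (flatten (place (N + 3) (t.removeNth w) c)) := by
        rw [apply_comp_cast I (Nat.mul_comm (N + 3) (N + 2))]
        congr 1 <;> funext k
        exacts [flatten_place_eq_flatten_place_removeNth (by omega) hvt k,
          flatten_place_eq_flatten_place_removeNth (by omega) hwt k]
    _ = I (N + 2) (t.removeNth v) (t.removeNth w) :=
        apply_flatten_place hexp hadd (removeNth_mem_stdSimplex hv hvt)
          (removeNth_mem_stdSimplex hw hwt) hc

def groupFirstTwo {n : ℕ} (r : Fin (n + 3) → ℝ) : Fin (n + 2) → Fin 2 → ℝ :=
  Fin.cons ![r 0, r 1] (place 2 (fun i => r i.succ.succ) fun _ => 1)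

lemma sum_groupFirstTwo {n : ℕ} (r : Fin (n + 3) → ℝ) (i : Fin (n + 2)) :
    ∑ j, groupFirstTwo r i j
      = (Fin.cons (r 0 + r 1) fun i => r i.succ.succ : Fin (n + 2) → ℝ) i := by
  cases i using Fin.cases with
  | zero => simp [groupFirstTwo, Fin.sum_univ_two]
  | succ i => simp [groupFirstTwo, sum_place _ (fun _ => one_lt_two) i]

lemma groupFirstTwo_nonneg {n : ℕ} {r : Fin (n + 3) → ℝ} (hr : ∀ i, 0 ≤ r i) (i : Fin (n + 2))
    (j : Fin 2) : 0 ≤ groupFirstTwo r i j := by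
  cases i using Fin.cases with
  | zero => fin_cases j <;> simp [groupFirstTwo, hr]
  | succ i =>
    simp only [groupFirstTwo, Fin.cons_succ]
    exact place_nonneg (fun _ => hr _) _ i j

lemma sum_sum_groupFirstTwo {n : ℕ} (r : Fin (n + 3) → ℝ) :
    ∑ i, ∑ j, groupFirstTwo r i j = ∑ i, r i := by
  rw [sum_congr rfl fun i _ => sum_groupFirstTwo r i, Fin.sum_cons, Fin.sum_univ_succ (n := n + 2),
    Fin.sum_univ_succ (n := n + 1), add_assoc, Fin.succ_zero_eq_one]

lemma flatten_groupFirstTwo {n : ℕ} (r : Fin (n + 3) → ℝ) (x : Fin ((n + 2) * 2))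
    (y : Fin ((n + 3) * 2)) (hxy : (y : ℕ) = if (x : ℕ) < 1 then (x : ℕ) else x + 1) :
    flatten (groupFirstTwo r) x = flatten (place 2 r fun _ => 0) y := by
  have hρ : ∀ _ : Fin (n + 3), 0 < 2 := fun _ => two_pos
  obtain ⟨⟨i, j⟩, rfl⟩ := finProdFinEquiv.surjective x
  rw [finProdFinEquiv_apply_val] at hxy
  rw [flatten_finProdFinEquiv]
  cases i using Fin.cases with
  | zero =>
    fin_cases j
    · rw [flatten_place_of_val_eq r hρ (i := 0) (by simpa using hxy)]
      rfl
    · rw [flatten_place_of_val_eq r hρ (i := 1) (by simpa using hxy)]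
      rfl
  | succ i =>
    fin_cases j
    · rw [flatten_place_of_forall_ne r hρ fun i' => by
        simp only [Fin.val_succ] at hxy
        split_ifs at hxy <;> omega]
      simp [groupFirstTwo, place, unitVec]
    · rw [flatten_place_of_val_eq r hρ (i := i.succ.succ) (by
        simp only [Fin.val_succ] at hxy ⊢
        split_ifs at hxy <;> omega)]
      simp [groupFirstTwo, place, unitVec]

lemma apply_flatten_groupFirstTwo (hexp : IsExpansible I) (hadd : IsAdditive α I) {n : ℕ}
    {r s : Fin (n + 3) → ℝ} (hr : r ∈ stdSimplex ℝ _) (hs : s ∈ stdSimplex ℝ _) :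
    I ((n + 2) * 2) (flatten (groupFirstTwo r)) (flatten (groupFirstTwo s)) = I (n + 3) r s := by
  have hρ : ∀ _ : Fin (n + 3), 0 < 2 := fun _ => two_pos
  have h₁ : 2 * n + 3 + 3 = (n + 3) * 2 := by ring
  have h₂ : 2 * n + 2 + 2 = (n + 2) * 2 := by ring
  set D : (Fin (n + 3) → ℝ) → Fin (2 * n + 3 + 3) → ℝ :=
    fun u => flatten (place 2 u fun _ => 0) ∘ Fin.cast h₁
  have hDmem : ∀ {u}, u ∈ stdSimplex ℝ _ → D u ∈ stdSimplex ℝ _ := fun hu =>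
    comp_mem_stdSimplex (flatten_mem_stdSimplex (place_nonneg hu.1 _)
      ((sum_sum_place _ hρ).trans hu.2)) (finCongr h₁)
  have hlast : ∀ u, D u (Fin.last _) = 0 := fun u =>
    flatten_place_of_forall_ne u hρ fun i => by
      simp only [Fin.val_cast, Fin.val_last]
      omega
  have hone : ∀ u, (Fin.last _).removeNth (D u) 1 = 0 := fun u =>
    flatten_place_of_forall_ne u hρ fun i => by
      simp only [Fin.succAbove_last, Fin.castSucc_one, Fin.val_cast, Fin.val_one]
      omega
  -- `D u` is `u` with a zero after each entry; deleting its last zero and the one at position `1`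
  -- leaves the flattened `groupFirstTwo u`.
  calc I ((n + 2) * 2) (flatten (groupFirstTwo r)) (flatten (groupFirstTwo s))
      = I (2 * n + 2 + 2) ((1 : Fin _).removeNth ((Fin.last _).removeNth (D r)))
          ((1 : Fin _).removeNth ((Fin.last _).removeNth (D s))) := by
        rw [apply_comp_cast I h₂]
        congr 1 <;> funext x <;> apply flatten_groupFirstTwo <;> simp [val_succAbove]
    _ = I (2 * n + 3 + 3) (D r) (D s) := by
        rw [apply_removeNth hexp hadd (Fin.last _) (hDmem hr) (hDmem hs) (hlast r) (hlast s),
          apply_removeNth hexp hadd 1 (removeNth_mem_stdSimplex (hDmem hr) (hlast r))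
            (removeNth_mem_stdSimplex (hDmem hs) (hlast s)) (hone r) (hone s)]
    _ = I ((n + 1 + 2) * (0 + 2)) (flatten (place 2 r fun _ => 0))
          (flatten (place 2 s fun _ => 0)) := (apply_comp_cast I h₁ _ _).symm
    _ = I (n + 3) r s := apply_flatten_place hexp hadd hr hs hρ

lemma apply_flatten_groupFirstTwo_eq_add (hexp : IsExpansible I) (hadd : IsAdditive α I) {n : ℕ}
    {r s : Fin (n + 3) → ℝ} (hr : r ∈ stdSimplex ℝ _) (hs : s ∈ stdSimplex ℝ _) :
    I ((n + 2) * 2) (flatten (groupFirstTwo r)) (flatten (groupFirstTwo s))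
      = I (n + 2) (Fin.cons (r 0 + r 1) fun i => r i.succ.succ)
          (Fin.cons (s 0 + s 1) fun i => s i.succ.succ)
        + cpow (r 0 + r 1) α * cpow (s 0 + s 1) (1 - α) *
            I 2 ![r 0 / (r 0 + r 1), r 1 / (r 0 + r 1)]
              ![s 0 / (s 0 + s 1), s 1 / (s 0 + s 1)] := by
  -- stated over `Fin (0 + 2)`, the column type that `hadd n 0` produces, so that `simp` finds it
  have hrow : ∀ (u : Fin (n + 3) → ℝ) i, ∑ j : Fin (0 + 2), groupFirstTwo u i j
      = (Fin.cons (u 0 + u 1) fun i => u i.succ.succ : Fin (n + 2) → ℝ) i :=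
    sum_groupFirstTwo
  rw [hadd n 0 _ _ (groupFirstTwo_nonneg hr.1) (groupFirstTwo_nonneg hs.1)
    ((sum_sum_groupFirstTwo r).trans hr.2) ((sum_sum_groupFirstTwo s).trans hs.2)]
  simp only [hrow]
  rw [Fin.sum_univ_succ]
  simp only [Fin.cons_zero, Fin.cons_succ]
  rw [sum_eq_zero fun i _ => ?_, add_zero]
  · congr 2
    exact congrArg₂ (I 2) (funext fun j => by fin_cases j <;> rfl)
      (funext fun j => by fin_cases j <;> rfl)
  · exact (cpow_mul_cpow_mul_mul_div I α _ _ (unitVec 2 1) (unitVec 2 1)).trans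
      (by rw [apply_unitVec_self hexp hadd le_rfl one_lt_two, mul_zero])

end

end RelativeInformation

open RelativeInformation in
theorem expansible_additive_recursive (α : ℝ)
    (I : (n : ℕ) → (Fin n → ℝ) → (Fin n → ℝ) → ℝ)
    (hexp : ∀ n : ℕ, ∀ p q : Fin (n + 2) → ℝ,
      (∀ i, 0 ≤ p i) → (∀ i, 0 ≤ q i) → ∑ i, p i = 1 → ∑ i, q i = 1 →
      I (n + 3) (Fin.snoc p 0) (Fin.snoc q 0) = I (n + 2) p q)
    (hadd : ∀ n m : ℕ, ∀ p q : Fin (n + 2) → Fin (m + 2) → ℝ,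
      (∀ i j, 0 ≤ p i j) → (∀ i j, 0 ≤ q i j) →
      ∑ i, ∑ j, p i j = 1 → ∑ i, ∑ j, q i j = 1 →
      I ((n + 2) * (m + 2))
          (fun k => p (finProdFinEquiv.symm k).1 (finProdFinEquiv.symm k).2)
          (fun k => q (finProdFinEquiv.symm k).1 (finProdFinEquiv.symm k).2)
        = I (n + 2) (fun i => ∑ j, p i j) (fun i => ∑ j, q i j)
          + ∑ i : Fin (n + 2),
              cpow (∑ j, p i j) α * cpow (∑ j, q i j) (1 - α) *
                I (m + 2) (fun j => p i j / ∑ j', p i j')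
                          (fun j => q i j / ∑ j', q i j'))
    (n : ℕ) (r s : Fin (n + 3) → ℝ)
    (hr : ∀ i, 0 ≤ r i) (hs : ∀ i, 0 ≤ s i)
    (hrs : ∑ i, r i = 1) (hss : ∑ i, s i = 1) :
    I (n + 3) r s =
      I (n + 2) (Fin.cons (r 0 + r 1) fun i : Fin (n + 1) => r i.succ.succ)
                (Fin.cons (s 0 + s 1) fun i : Fin (n + 1) => s i.succ.succ)
      + cpow (r 0 + r 1) α * cpow (s 0 + s 1) (1 - α) *
          I 2 ![r 0 / (r 0 + r 1), r 1 / (r 0 + r 1)]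
              ![s 0 / (s 0 + s 1), s 1 / (s 0 + s 1)] := by
  have hr' : r ∈ stdSimplex ℝ _ := ⟨hr, hrs⟩
  have hs' : s ∈ stdSimplex ℝ _ := ⟨hs, hss⟩
  rw [← apply_flatten_groupFirstTwo hexp hadd hr' hs']
  exact apply_flatten_groupFirstTwo_eq_add hexp hadd hr' hs'
end
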